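/- For every matroid M of rank r on the ground set {1,…,n}, the element K(M) of F lies in the image of the polynomial ring ℚ[u_1,…,u_r,t_1,…,t_n] in F; that is, the a priori rational function K(M) is a polynomial in u_1,…,u_r and t_1,…,t_n. -/

import Mathlib

open scoped Classical

/-- The field of rational functions `F = Frac(ℚ[u_1,…,u_r,t_1,…,t_n])`. -/
abbrev F (r n : ℕ) : Type := FractionRing (MvPolynomial (Fin r ⊕ Fin n) ℚ)

/-- The variable `u_i` viewed in `F`. -/
noncomputable def U (r n : ℕ) (i : Fin r) : F r n :=
  algebraMap (MvPolynomial (Fin r ⊕ Fin n) ℚ) (F r n) (MvPolynomial.X (Sum.inl i))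

/-- The variable `t_j` viewed in `F`. -/
noncomputable def T (r n : ℕ) (j : Fin n) : F r n :=
  algebraMap (MvPolynomial (Fin r ⊕ Fin n) ℚ) (F r n) (MvPolynomial.X (Sum.inr j))

/-- `B(w) = {w_i : w_i ∉ cl_M({w_1,…,w_{i-1}})}`, the lexicographically first basis of `M`
in the list `(w_1,…,w_n)`. -/
def firstBasis {n : ℕ} (M : Matroid (Fin n)) (w : Equiv.Perm (Fin n)) : Set (Fin n) :=
  {x | x ∉ M.closure (⇑w '' {i | i < w.symm x})}

/-- The rational function
`K(M) = Σ_{w ∈ S_n} [∏_{j ∉ B(w)} ∏_{i=1}^{r} (1 − u_i t_j)] · ∏_{i=1}^{n−1} (1 − t_{w_{i+1}}/t_{w_i})^{−1}`. -/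
noncomputable def Kclass (r n : ℕ) (M : Matroid (Fin n)) : F r n :=
  ∑ w : Equiv.Perm (Fin n),
    (∏ j : Fin n, if j ∈ firstBasis M w then 1
      else ∏ i : Fin r, (1 - U r n i * T r n j)) *
    ∏ i : Fin n, (if h : (i : ℕ) + 1 < n
      then (1 - T r n (w ⟨(i : ℕ) + 1, h⟩) / T r n (w i))⁻¹ else 1)

/-!
Multiplying by the Vandermonde determinant `V = ∏_{i<j} (t_j - t_i)` clears all denominators:
the summand of `w` becomes `N_w ρ_w`, where `N_w` is a polynomial and
`ρ_w = V / ∏_k (t_{w_k} - t_{w_{k+1}})`. So it suffices that `Q = ∑_w N_w ρ_w` is divisible by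
each of the pairwise non-associated primes `t_a - t_b`, i.e. that `Q` vanishes under `t_b ↦ t_a`.
Pair `w` with `(a b) ∘ w`. Since `V` is alternating, the substitution turns `ρ_{(a b) ∘ w}` into
`-ρ_w`. If `a` and `b` are not neighbours in `w`, then `t_a - t_b` divides `ρ_w`; if they are, the
exchange axiom shows that the greedy basis `B(w)` is either unchanged or has `a` and `b`
exchanged, so `N_w` is unchanged by the substitution.
-/

open Matrix

theorem Finset.prod_dvd_of_prime_of_not_associated {M₀ ι : Type*} [CommMonoidWithZero M₀]
    [IsCancelMulZero M₀] {s : Finset ι} {f : ι → M₀} {q : M₀} (hprime : ∀ i ∈ s, Prime (f i))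
    (hassoc : (s : Set ι).Pairwise fun i j => ¬ Associated (f i) (f j))
    (hdvd : ∀ i ∈ s, f i ∣ q) : ∏ i ∈ s, f i ∣ q := by
  rw [Finset.prod_eq_multiset_prod]
  refine Multiset.prod_primes_dvd q (by simpa using hprime) (by simpa using hdvd) fun a => ?_
  rw [Multiset.countP_map, ← Finset.filter_val, Finset.card_val, Finset.card_le_one]
  intro i hi j hj
  simp only [Finset.mem_filter] at hi hj
  by_contra hij
  exact hassoc hi.1 hj.1 hij (hi.2.symm.trans hj.2)

namespace MvPolynomial

variable {σ R : Type*} [CommRing R]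

theorem X_sub_X_ne_zero [Nontrivial R] {i j : σ} (h : i ≠ j) :
    (X i - X j : MvPolynomial σ R) ≠ 0 :=
  sub_ne_zero.2 fun hX => h (X_injective hX)

theorem det_vandermonde_X_ne_zero [IsDomain R] {n : ℕ} {v : Fin n → σ} (hv : v.Injective) :
    (vandermonde fun k => (X (v k) : MvPolynomial σ R)).det ≠ 0 :=
  det_vandermonde_ne_zero_iff.2 (X_injective.comp hv)

variable [DecidableEq σ]

noncomputable def identifyVars (i j : σ) : MvPolynomial σ R →ₐ[R] MvPolynomial σ R :=
  aeval (Function.update X j (X i))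

theorem identifyVars_X (i j k : σ) :
    identifyVars (R := R) i j (X k) = X (if k = j then i else k) := by
  rw [identifyVars, aeval_X, Function.update_apply, apply_ite X]

theorem identifyVars_rename_swap (i j : σ) (p : MvPolynomial σ R) :
    identifyVars i j (rename (Equiv.swap i j) p) = identifyVars i j p := by
  rw [← AlgHom.comp_apply]
  congr 1
  ext k
  simp only [AlgHom.comp_apply, rename_X, identifyVars_X]
  rcases eq_or_ne k i with rfl | hki
  · simp
  rcases eq_or_ne k j with rfl | hkj
  · simp
  · rw [Equiv.swap_apply_of_ne_of_ne hki hkj]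

theorem X_sub_X_dvd_sub_identifyVars (i j : σ) (p : MvPolynomial σ R) :
    X i - X j ∣ p - identifyVars i j p := by
  induction p using MvPolynomial.induction_on with
  | C a => simp
  | add p q hp hq =>
    rw [map_add, add_sub_add_comm]
    exact dvd_add hp hq
  | mul_X p k hp =>
    have hX : X i - X j ∣ X k - identifyVars (R := R) i j (X k) := by
      rw [identifyVars_X]
      split_ifs with hkj
      · exact ⟨-1, by rw [hkj]; ring⟩
      · simp
    rw [map_mul, show p * X k - identifyVars i j p * identifyVars i j (X k) =
      (p - identifyVars i j p) * X k + identifyVars i j p * (X k - identifyVars i j (X k)) by ring]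
    exact dvd_add (hp.mul_right _) (hX.mul_left _)

theorem X_sub_X_dvd_iff_identifyVars_eq_zero {i j : σ} {p : MvPolynomial σ R} :
    X i - X j ∣ p ↔ identifyVars i j p = 0 := by
  refine ⟨fun ⟨q, hq⟩ => ?_, fun h => by simpa [h] using X_sub_X_dvd_sub_identifyVars i j p⟩
  rw [hq, map_mul, map_sub, identifyVars_X, identifyVars_X, if_pos rfl]
  split_ifs <;> simp

theorem prime_X_sub_X [IsDomain R] {i j : σ} (h : i ≠ j) :
    Prime (X i - X j : MvPolynomial σ R) := by
  have hker : Ideal.span {X i - X j} = RingHom.ker (identifyVars (R := R) i j) := by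
    ext p
    rw [Ideal.mem_span_singleton, RingHom.mem_ker, ← X_sub_X_dvd_iff_identifyVars_eq_zero]
  rw [← Ideal.span_singleton_prime (X_sub_X_ne_zero h), hker]
  exact RingHom.ker_isPrime _

theorem X_sub_X_dvd_X_sub_X_iff [Nontrivial R] {i j k l : σ} (hkl : k ≠ l) :
    X i - X j ∣ (X k - X l : MvPolynomial σ R) ↔ (k = i ∧ l = j) ∨ (k = j ∧ l = i) := by
  rw [X_sub_X_dvd_iff_identifyVars_eq_zero, map_sub, identifyVars_X, identifyVars_X, sub_eq_zero,
    X_inj]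
  split_ifs <;> grind

variable {n : ℕ}

theorem X_sub_X_dvd_det_vandermonde (v : Fin n → σ) {i j : Fin n} (hij : i ≠ j) :
    X (v i) - X (v j) ∣ (vandermonde fun k => (X (v k) : MvPolynomial σ R)).det := by
  rw [X_sub_X_dvd_iff_identifyVars_eq_zero, AlgHom.map_det]
  refine det_zero_of_row_eq hij ?_
  ext k
  simp only [AlgHom.mapMatrix_apply, map_apply, vandermonde_apply, map_pow, identifyVars_X]
  split_ifs <;> simp_all

theorem rename_swap_det_vandermonde {v : Fin n → σ} (hv : v.Injective) {i j : Fin n}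
    (hij : i ≠ j) :
    rename (Equiv.swap (v i) (v j)) (vandermonde fun k => (X (v k) : MvPolynomial σ R)).det =
      -(vandermonde fun k => (X (v k) : MvPolynomial σ R)).det := by
  have hperm : (rename (Equiv.swap (v i) (v j))).mapMatrix
      (vandermonde fun k => (X (v k) : MvPolynomial σ R)) =
      (vandermonde fun k => (X (v k) : MvPolynomial σ R)).submatrix (Equiv.swap i j) id := by
    ext k l
    simp [vandermonde_apply, hv.swap_apply]
  rw [AlgHom.map_det, hperm, det_permute, Equiv.Perm.sign_swap hij]
  simp

theorem det_vandermonde_X_dvd [IsDomain R] {v : Fin n → σ} (hv : v.Injective)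
    {p : MvPolynomial σ R} (h : ∀ i j, i ≠ j → X (v i) - X (v j) ∣ p) :
    (vandermonde fun k => (X (v k) : MvPolynomial σ R)).det ∣ p := by
  rw [det_vandermonde, Finset.prod_sigma']
  refine Finset.prod_dvd_of_prime_of_not_associated ?_ ?_ fun x hx => h _ _ ?_
  · intro x hx
    exact prime_X_sub_X (hv.ne (Finset.mem_Ioi.1 (Finset.mem_sigma.1 hx).2).ne')
  · rintro ⟨i, j⟩ hx ⟨k, l⟩ hy hne hassoc
    simp only [Finset.coe_sigma, Set.mem_sigma_iff, Finset.coe_univ, Set.mem_univ,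
      Finset.coe_Ioi, Set.mem_Ioi, true_and] at hx hy
    have hdvd := hassoc.dvd
    rw [X_sub_X_dvd_X_sub_X_iff (hv.ne hy.ne'), hv.eq_iff, hv.eq_iff, hv.eq_iff,
      hv.eq_iff] at hdvd
    rcases hdvd with ⟨rfl, rfl⟩ | ⟨rfl, rfl⟩
    · exact hne rfl
    · exact lt_asymm hx hy
  · exact (Finset.mem_Ioi.1 (Finset.mem_sigma.1 hx).2).ne'

end MvPolynomial

theorem Matroid.mem_closure_insert_iff_of_or {α : Type*} {M : Matroid α} {X : Set α} {e f : α}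
    (h : e ∈ M.closure X ∨ f ∈ M.closure X) :
    e ∈ M.closure (insert f X) ↔ e ∈ M.closure X := by
  rcases h with h | h
  · exact iff_of_true (M.closure_subset_closure (Set.subset_insert _ _) h) h
  · rw [M.closure_insert_eq_of_mem_closure h]

theorem Fin.image_setOf_lt_succ {α : Type*} {m : ℕ} (f : Fin (m + 1) → α) (k : Fin m) :
    f '' {j | j < k.succ} = insert (f k.castSucc) (f '' {j | j < k.castSucc}) := by
  rw [← Set.image_insert_eq]
  congr 1
  ext j
  simp only [Set.mem_ofPred_eq, Set.mem_insert_iff, Fin.lt_def, Fin.ext_iff, Fin.val_succ,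
    Fin.val_castSucc]
  omega

section firstBasis

variable {m : ℕ} {M : Matroid (Fin (m + 1))} (w : Equiv.Perm (Fin (m + 1))) (k : Fin m)

theorem apply_mem_firstBasis_iff (i : Fin (m + 1)) :
    w i ∈ firstBasis M w ↔ w i ∉ M.closure (w '' {j | j < i}) := by
  rw [firstBasis, Set.mem_ofPred_eq, Equiv.symm_apply_apply]

theorem image_mul_swap_setOf_lt {i : Fin (m + 1)} (hi : i ≠ k.succ) :
    ⇑(w * Equiv.swap k.castSucc k.succ) '' {j | j < i} = w '' {j | j < i} := by
  rw [Equiv.Perm.coe_mul, Set.image_comp]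
  congr 1
  ext j
  rw [Set.mem_image_equiv, Equiv.symm_swap, Set.mem_ofPred_eq, Set.mem_ofPred_eq,
    Equiv.swap_apply_def]
  rw [Ne, Fin.ext_iff, Fin.val_succ] at hi
  split_ifs with h1 h2 <;> simp only [Fin.lt_def, Fin.ext_iff, Fin.val_succ,
    Fin.val_castSucc] at * <;> omega

theorem mem_firstBasis_mul_swap_iff_of_ne {x : Fin (m + 1)} (hc : x ≠ w k.castSucc)
    (hd : x ≠ w k.succ) :
    x ∈ firstBasis M (w * Equiv.swap k.castSucc k.succ) ↔ x ∈ firstBasis M w := by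
  obtain ⟨i, rfl⟩ := w.surjective x
  have hi : Equiv.swap k.castSucc k.succ i = i :=
    Equiv.swap_apply_of_ne_of_ne (ne_of_apply_ne w hc) (ne_of_apply_ne w hd)
  have h := apply_mem_firstBasis_iff (M := M) (w * Equiv.swap k.castSucc k.succ) i
  rw [Equiv.Perm.mul_apply, hi, image_mul_swap_setOf_lt w k (ne_of_apply_ne w hd)] at h
  rw [h, apply_mem_firstBasis_iff]

theorem firstBasis_mul_swap :
    firstBasis M (w * Equiv.swap k.castSucc k.succ) = firstBasis M w ∨
      firstBasis M (w * Equiv.swap k.castSucc k.succ) =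
        Equiv.swap (w k.castSucc) (w k.succ) '' firstBasis M w := by
  set w' := w * Equiv.swap k.castSucc k.succ
  set c := w k.castSucc
  set d := w k.succ
  set P := w '' {j | j < k.castSucc}
  have hc : c ∈ firstBasis M w ↔ c ∉ M.closure P := apply_mem_firstBasis_iff w _
  have hd : d ∈ firstBasis M w ↔ d ∉ M.closure (insert c P) := by
    rw [apply_mem_firstBasis_iff, Fin.image_setOf_lt_succ]
  have hd' : d ∈ firstBasis M w' ↔ d ∉ M.closure P := by
    have h := apply_mem_firstBasis_iff (M := M) w' k.castSucc
    rwa [Equiv.Perm.mul_apply, Equiv.swap_apply_left,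
      image_mul_swap_setOf_lt w k Fin.castSucc_lt_succ.ne] at h
  have hc' : c ∈ firstBasis M w' ↔ c ∉ M.closure (insert d P) := by
    have h := apply_mem_firstBasis_iff (M := M) w' k.succ
    rwa [Equiv.Perm.mul_apply, Equiv.swap_apply_right, Fin.image_setOf_lt_succ,
      Equiv.Perm.mul_apply, Equiv.swap_apply_left,
      image_mul_swap_setOf_lt w k Fin.castSucc_lt_succ.ne] at h
  by_cases hP : c ∈ M.closure P ∨ d ∈ M.closure P
  · left
    ext x
    rcases eq_or_ne x c with rfl | hxc
    · rw [hc', hc, Matroid.mem_closure_insert_iff_of_or hP]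
    rcases eq_or_ne x d with rfl | hxd
    · rw [hd', hd, Matroid.mem_closure_insert_iff_of_or hP.symm]
    exact mem_firstBasis_mul_swap_iff_of_ne w k hxc hxd
  · right
    push Not at hP
    ext x
    rw [Set.mem_image_equiv, Equiv.symm_swap]
    rcases eq_or_ne x c with rfl | hxc
    · rw [Equiv.swap_apply_left, hc', hd, not_iff_not]
      simpa [hP.1, hP.2] using Matroid.closure_exchange_iff (M := M) (X := P) (e := c) (f := d)
    rcases eq_or_ne x d with rfl | hxd
    · rw [Equiv.swap_apply_right, hd', hc]
      exact iff_of_true hP.2 hP.1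
    rw [Equiv.swap_apply_of_ne_of_ne hxc hxd]
    exact mem_firstBasis_mul_swap_iff_of_ne w k hxc hxd

end firstBasis

open MvPolynomial Sum

namespace Kclass

variable (r : ℕ) {m : ℕ}

-- With `u_i = X (inl i)` and `t_j = X (inr j)`, the summand of `w` in `K(M)` is
-- `nonbasisFactor r (firstBasis M w) * headProd r w / gapProd r w` (see `eq_sum_div`).
noncomputable def nonbasisFactor {n : ℕ} (B : Set (Fin n)) : MvPolynomial (Fin r ⊕ Fin n) ℚ :=
  ∏ j, if j ∈ B then 1 else ∏ i, (1 - X (inl i) * X (inr j))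

noncomputable def headProd (w : Equiv.Perm (Fin (m + 1))) :
    MvPolynomial (Fin r ⊕ Fin (m + 1)) ℚ :=
  ∏ k : Fin m, X (inr (w k.castSucc))

noncomputable def gapProd (w : Equiv.Perm (Fin (m + 1))) :
    MvPolynomial (Fin r ⊕ Fin (m + 1)) ℚ :=
  ∏ k : Fin m, (X (inr (w k.castSucc)) - X (inr (w k.succ)))

noncomputable def vandermondeT (n : ℕ) : MvPolynomial (Fin r ⊕ Fin n) ℚ :=
  (vandermonde fun j => X (inr j)).det

theorem vandermondeT_ne_zero (n : ℕ) : vandermondeT r n ≠ 0 :=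
  det_vandermonde_X_ne_zero inr_injective

def Adjacent (w : Equiv.Perm (Fin (m + 1))) (a b : Fin (m + 1)) : Prop :=
  ∃ k : Fin m, (w k.castSucc = a ∧ w k.succ = b) ∨ (w k.castSucc = b ∧ w k.succ = a)

variable {r}

theorem rename_swap_nonbasisFactor {n : ℕ} (a b : Fin n) (B : Set (Fin n)) :
    rename (Equiv.swap (inr a) (inr b)) (nonbasisFactor r B) =
      nonbasisFactor r (Equiv.swap a b '' B) := by
  rw [nonbasisFactor, nonbasisFactor, map_prod, ← Equiv.prod_comp (Equiv.swap a b)]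
  refine Finset.prod_congr rfl fun j _ => ?_
  rw [Set.mem_image_equiv, Equiv.symm_swap]
  split_ifs <;> simp [Equiv.swap_apply_of_ne_of_ne, inr_injective.swap_apply]

theorem rename_swap_headProd (a b : Fin (m + 1)) (w : Equiv.Perm (Fin (m + 1))) :
    rename (Equiv.swap (inr a) (inr b)) (headProd r w) = headProd r (Equiv.swap a b * w) := by
  simp [headProd, map_prod, inr_injective.swap_apply]

theorem rename_swap_gapProd (a b : Fin (m + 1)) (w : Equiv.Perm (Fin (m + 1))) :
    rename (Equiv.swap (inr a) (inr b)) (gapProd r w) = gapProd r (Equiv.swap a b * w) := by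
  simp [gapProd, map_prod, inr_injective.swap_apply]

theorem inr_apply_castSucc_ne_inr_apply_succ (w : Equiv.Perm (Fin (m + 1))) (k : Fin m) :
    inr (w k.castSucc) ≠ (inr (w k.succ) : Fin r ⊕ Fin (m + 1)) :=
  inr_injective.ne (w.injective.ne Fin.castSucc_lt_succ.ne)

theorem gapProd_ne_zero (w : Equiv.Perm (Fin (m + 1))) : gapProd r w ≠ 0 :=
  Finset.prod_ne_zero_iff.2 fun k _ => X_sub_X_ne_zero (inr_apply_castSucc_ne_inr_apply_succ w k)

theorem gapProd_dvd_vandermondeT (w : Equiv.Perm (Fin (m + 1))) :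
    gapProd r w ∣ vandermondeT r (m + 1) := by
  refine Finset.prod_dvd_of_prime_of_not_associated
    (fun k _ => prime_X_sub_X (inr_apply_castSucc_ne_inr_apply_succ w k)) ?_
    (fun k _ => X_sub_X_dvd_det_vandermonde inr (w.injective.ne Fin.castSucc_lt_succ.ne))
  intro k _ l _ hkl hassoc
  have hdvd := hassoc.dvd
  simp only [X_sub_X_dvd_X_sub_X_iff (inr_apply_castSucc_ne_inr_apply_succ w l), inr.injEq,
    w.apply_eq_iff_eq, Fin.ext_iff, Fin.val_castSucc, Fin.val_succ] at hdvd
  omega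

theorem X_sub_X_not_dvd_gapProd {a b : Fin (m + 1)} {w : Equiv.Perm (Fin (m + 1))} (hab : a ≠ b)
    (h : ¬ Adjacent w a b) : ¬ X (inr a) - X (inr b) ∣ gapProd r w := by
  rw [gapProd, (prime_X_sub_X (inr_injective.ne hab)).dvd_finsetProd_iff]
  rintro ⟨k, -, hk⟩
  rw [X_sub_X_dvd_X_sub_X_iff (inr_apply_castSucc_ne_inr_apply_succ w k), inr.injEq, inr.injEq,
    inr.injEq, inr.injEq] at hk
  exact h ⟨k, hk⟩

theorem exists_mul_swap_of_adjacent {a b : Fin (m + 1)} {w : Equiv.Perm (Fin (m + 1))}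
    (h : Adjacent w a b) : ∃ k : Fin m, Equiv.swap a b * w = w * Equiv.swap k.castSucc k.succ ∧
      Equiv.swap a b = Equiv.swap (w k.castSucc) (w k.succ) := by
  obtain ⟨k, ⟨rfl, rfl⟩ | ⟨rfl, rfl⟩⟩ := h
  · exact ⟨k, (Equiv.mul_swap_eq_swap_mul _ _ _).symm, rfl⟩
  · exact ⟨k, by rw [Equiv.swap_comm, Equiv.mul_swap_eq_swap_mul], Equiv.swap_comm _ _⟩

theorem identifyVars_nonbasisFactor_mul_headProd_swap {M : Matroid (Fin (m + 1))}
    {a b : Fin (m + 1)} {w : Equiv.Perm (Fin (m + 1))} (h : Adjacent w a b) :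
    identifyVars (inr a) (inr b) (nonbasisFactor r (firstBasis M (Equiv.swap a b * w)) *
        headProd r (Equiv.swap a b * w)) =
      identifyVars (inr a) (inr b) (nonbasisFactor r (firstBasis M w) * headProd r w) := by
  rw [map_mul, map_mul, ← rename_swap_headProd, identifyVars_rename_swap]
  congr 1
  obtain ⟨k, hw, hab⟩ := exists_mul_swap_of_adjacent h
  rcases firstBasis_mul_swap (M := M) w k with hB | hB <;> rw [hw, hB]
  rw [← hab, ← rename_swap_nonbasisFactor, identifyVars_rename_swap]

variable {ρ : Equiv.Perm (Fin (m + 1)) → MvPolynomial (Fin r ⊕ Fin (m + 1)) ℚ}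

theorem identifyVars_cofactor_swap (hρ : ∀ w, vandermondeT r (m + 1) = gapProd r w * ρ w)
    {a b : Fin (m + 1)} (hab : a ≠ b) (w : Equiv.Perm (Fin (m + 1))) :
    identifyVars (inr a) (inr b) (ρ (Equiv.swap a b * w)) =
      -identifyVars (inr a) (inr b) (ρ w) := by
  have hswap : ρ (Equiv.swap a b * w) = -rename (Equiv.swap (inr a) (inr b)) (ρ w) := by
    refine mul_left_cancel₀ (gapProd_ne_zero (Equiv.swap a b * w)) ?_
    rw [← hρ, ← rename_swap_gapProd, mul_neg, ← map_mul, ← hρ, vandermondeT,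
      rename_swap_det_vandermonde inr_injective hab, neg_neg]
  rw [hswap, map_neg, identifyVars_rename_swap]

theorem identifyVars_cofactor_eq_zero (hρ : ∀ w, vandermondeT r (m + 1) = gapProd r w * ρ w)
    {a b : Fin (m + 1)} (hab : a ≠ b) {w : Equiv.Perm (Fin (m + 1))} (h : ¬ Adjacent w a b) :
    identifyVars (inr a) (inr b) (ρ w) = 0 := by
  have hdvd : X (inr a) - X (inr b) ∣ gapProd r w * ρ w :=
    hρ w ▸ X_sub_X_dvd_det_vandermonde inr hab
  rw [← X_sub_X_dvd_iff_identifyVars_eq_zero]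
  exact ((prime_X_sub_X (inr_injective.ne hab)).dvd_or_dvd hdvd).resolve_left
    (X_sub_X_not_dvd_gapProd hab h)

theorem identifyVars_sum_eq_zero (hρ : ∀ w, vandermondeT r (m + 1) = gapProd r w * ρ w)
    (M : Matroid (Fin (m + 1))) {a b : Fin (m + 1)} (hab : a ≠ b) :
    identifyVars (inr a) (inr b)
      (∑ w, nonbasisFactor r (firstBasis M w) * headProd r w * ρ w) = 0 := by
  rw [map_sum]
  refine Finset.sum_ninvolution (Equiv.swap a b * ·) (fun w => ?_) (fun w _ => ?_)
    (fun _ => Finset.mem_univ _) (Equiv.swap_mul_self_mul a b)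
  · rw [map_mul _ _ (ρ w), map_mul _ _ (ρ _), identifyVars_cofactor_swap hρ hab]
    by_cases hw : Adjacent w a b
    · rw [identifyVars_nonbasisFactor_mul_headProd_swap hw]
      ring
    · rw [identifyVars_cofactor_eq_zero hρ hab hw]
      ring
  · rw [Ne, mul_eq_right, Equiv.swap_eq_one_iff]
    exact hab

theorem vandermondeT_dvd_sum (hρ : ∀ w, vandermondeT r (m + 1) = gapProd r w * ρ w)
    (M : Matroid (Fin (m + 1))) :
    vandermondeT r (m + 1) ∣ ∑ w, nonbasisFactor r (firstBasis M w) * headProd r w * ρ w :=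
  det_vandermonde_X_dvd inr_injective fun _ _ hab =>
    X_sub_X_dvd_iff_identifyVars_eq_zero.2 (identifyVars_sum_eq_zero hρ M hab)

theorem T_ne_zero {n : ℕ} (j : Fin n) : T r n j ≠ 0 :=
  (map_ne_zero_iff _ (IsFractionRing.injective _ _)).2 (X_ne_zero _)

theorem prod_nonbasis_eq_algebraMap {n : ℕ} (B : Set (Fin n)) :
    (∏ j : Fin n, if j ∈ B then 1 else ∏ i : Fin r, (1 - U r n i * T r n j)) =
      algebraMap _ (F r n) (nonbasisFactor r B) := by
  simp only [nonbasisFactor, map_prod, apply_ite, map_one, map_sub, map_mul, U, T]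

theorem prod_consecutive_eq_div (w : Equiv.Perm (Fin (m + 1))) :
    (∏ i : Fin (m + 1), if h : (i : ℕ) + 1 < m + 1
      then (1 - T r (m + 1) (w ⟨(i : ℕ) + 1, h⟩) / T r (m + 1) (w i))⁻¹ else 1) =
      algebraMap _ (F r (m + 1)) (headProd r w) / algebraMap _ _ (gapProd r w) := by
  rw [Fin.prod_univ_castSucc, dif_neg (by simp), mul_one, headProd, gapProd, map_prod, map_prod,
    ← Finset.prod_div_distrib]
  refine Finset.prod_congr rfl fun k _ => ?_
  rw [dif_pos (by simp), one_sub_div (T_ne_zero _), inv_div, map_sub]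
  rfl

theorem eq_sum_div (M : Matroid (Fin (m + 1))) :
    Kclass r (m + 1) M = ∑ w, algebraMap _ (F r (m + 1))
      (nonbasisFactor r (firstBasis M w) * headProd r w) / algebraMap _ _ (gapProd r w) := by
  refine Finset.sum_congr rfl fun w _ => ?_
  rw [prod_nonbasis_eq_algebraMap, prod_consecutive_eq_div, map_mul, mul_div_assoc]

end Kclass

theorem Kclass_is_polynomial_general (r n : ℕ) (M : Matroid (Fin n)) :
    ∃ p : MvPolynomial (Fin r ⊕ Fin n) ℚ,
      algebraMap (MvPolynomial (Fin r ⊕ Fin n) ℚ) (F r n) p = Kclass r n M := by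
  cases n with
  | zero => exact ⟨1, by simp [Kclass]⟩
  | succ m =>
    choose ρ hρ using fun w => Kclass.gapProd_dvd_vandermondeT (r := r) w
    obtain ⟨p, hp⟩ := Kclass.vandermondeT_dvd_sum hρ M
    refine ⟨p, ?_⟩
    have hinj := IsFractionRing.injective (MvPolynomial (Fin r ⊕ Fin (m + 1)) ℚ) (F r (m + 1))
    refine mul_left_cancel₀ ((map_ne_zero_iff _ hinj).2 (Kclass.vandermondeT_ne_zero r _)) ?_
    rw [← map_mul, ← hp, map_sum, Kclass.eq_sum_div, Finset.mul_sum]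
    refine Finset.sum_congr rfl fun w _ => ?_
    have hg := (map_ne_zero_iff _ hinj).2 (Kclass.gapProd_ne_zero (r := r) w)
    rw [hρ w]
    simp only [map_mul]
    field_simp

/-- For every matroid `M` of rank `r` on `{1,…,n}`, the a priori rational function `K(M)`
is a polynomial in `u_1,…,u_r` and `t_1,…,t_n`. -/
theorem Kclass_is_polynomial (r n : ℕ) (hr : 1 ≤ r) (hrn : r ≤ n)
    (M : Matroid (Fin n)) (hE : M.E = Set.univ)
    (hrank : ∀ B : Set (Fin n), M.IsBase B → B.ncard = r) :
    ∃ p : MvPolynomial (Fin r ⊕ Fin n) ℚ,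
      algebraMap (MvPolynomial (Fin r ⊕ Fin n) ℚ) (F r n) p = Kclass r n M :=
  Kclass_is_polynomial_general r n M
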